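/- Let the final 'star equilibrium' be: clique on T_A, star center x ∈ T_B adjacent to all of T_A, and |T_B| − 1 leaves adjacent only to x. Its social cost S satisfies S ≤ |T_A|(|T_A|−1)(c + A) + 2c_B|T_B| + (A+1)(3|T_A||T_B| + |T_B|) + 2(|T_B|−1)², and in the limit |T_B| → ∞ with |T_B|/|T_A| → ∞, S/S_optimal → 1, where S_optimal = 2|T_B|(|T_B| − 1 + c + (A+1)(|T_A| − 1/2)) + |T_A|(|T_A|−1)(c_A + A). -/

import Mathlib

open SimpleGraph Finset

/-- Cost of player `i`: link costs plus weighted distances (weight `A` to type-A nodes). -/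
noncomputable def cost {V : Type*} [Fintype V] [DecidableEq V] (A cA cB : ℝ) (tA : V → Bool)
    (G : SimpleGraph V) (i : V) : ℝ :=
  (Set.ncard {j | G.Adj i j} : ℝ) * (if tA i then cA else cB) +
    ∑ j ∈ Finset.univ.erase i, (if tA j then A else 1) * (G.dist i j : ℝ)

/-- Social cost: sum of all players' costs. -/
noncomputable def socialCost {V : Type*} [Fintype V] [DecidableEq V] (A cA cB : ℝ)
    (tA : V → Bool) (G : SimpleGraph V) : ℝ :=
  ∑ i, cost A cA cB tA G i

/-- The star equilibrium: clique on `T_A`, star center `x` (type-B index `0`) adjacent to all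
of `T_A`, and `|T_B| - 1` type-B leaves adjacent only to `x`. -/
def starGraph (nA nB : ℕ) : SimpleGraph (Fin nA ⊕ Fin nB) :=
  SimpleGraph.fromRel (fun u v =>
    match u, v with
    | .inl _, .inl _ => True
    | .inl _, .inr b => (b : ℕ) = 0
    | .inr b, .inl _ => (b : ℕ) = 0
    | .inr b, .inr b' => (b : ℕ) = 0 ∨ (b' : ℕ) = 0)

/-- Social cost of the star equilibrium. -/
noncomputable def starCost (A cA cB : ℝ) (nA nB : ℕ) : ℝ :=
  socialCost A cA cB (fun v => v.isLeft) (starGraph nA nB)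

/-- Social cost of the optimal configuration (all type-B nodes attached to one clique node). -/
noncomputable def optFormula (A cA cB : ℝ) (nA nB : ℕ) : ℝ :=
  2 * (nB : ℝ) * ((nB : ℝ) - 1 + (cA + cB) / 2 + (A + 1) * ((nA : ℝ) - 1 / 2)) +
    (nA : ℝ) * ((nA : ℝ) - 1) * (cA + A)

/-! The centre of the star is adjacent to every other vertex, so any two distinct vertices are at
distance 1 or 2 according to whether they are adjacent, and the social cost of the star is an
explicit polynomial in `|T_A|` and `|T_B|`. Its difference with `S_optimal` is linear in
`|T_A| + |T_B|`, while `S_optimal ≥ 2|T_B|²`; hence the ratio is `1 + O(1/|T_B|)` once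
`|T_A| ≤ |T_B|`. -/

theorem SimpleGraph.dist_eq_of_forall_adj {V : Type*} [DecidableEq V] {G : SimpleGraph V}
    [DecidableRel G.Adj] {x : V} (hx : ∀ v, v ≠ x → G.Adj x v) (u v : V) :
    G.dist u v = if u = v then 0 else if G.Adj u v then 1 else 2 := by
  split_ifs with huv h
  · exact huv ▸ dist_self
  · exact dist_eq_one_iff_adj.2 h
  · have hux : u ≠ x := fun hu => h (hu ▸ hx v fun h' => huv (hu ▸ h').symm)
    have hvx : v ≠ x := fun hv => h (hv ▸ (hx u (hv ▸ huv)).symm)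
    let p : G.Walk u v := .cons (hx u hux).symm (.cons (hx v hvx) .nil)
    have hle : G.dist u v ≤ 2 := dist_le p
    have hpos : 0 < G.dist u v := Reachable.pos_dist_of_ne ⟨p⟩ huv
    have hne : G.dist u v ≠ 1 := fun h1 => h (dist_eq_one_iff_adj.1 h1)
    omega

theorem cost_eq_sum {V : Type*} [Fintype V] [DecidableEq V] (A cA cB : ℝ) (tA : V → Bool)
    (G : SimpleGraph V) [DecidableRel G.Adj] (i : V) :
    cost A cA cB tA G i = ∑ j, ((if G.Adj i j then (if tA i then cA else cB) else 0) +
      (if tA j then A else 1) * (G.dist i j : ℝ)) := by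
  rw [cost, Finset.sum_add_distrib, Finset.sum_erase _ (by simp), Finset.sum_ite,
    Finset.sum_const_zero, add_zero, Finset.sum_const, nsmul_eq_mul, Set.ncard_eq_toFinset_card',
    Set.toFinset_ofPred]

theorem starGraph_adj_center (nA m : ℕ) (v : Fin nA ⊕ Fin (m + 1)) (hv : v ≠ .inr 0) :
    (_root_.starGraph nA (m + 1)).Adj (.inr 0) v := by
  rcases v with a | b
  · simp [_root_.starGraph]
  · simpa [_root_.starGraph, eq_comm] using hv

theorem Fintype.sum_ite_eq_else_const {α R : Type*} [Fintype α] [DecidableEq α]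
    [NonAssocRing R] (i : α) (c : R) :
    ∑ j, (if i = j then 0 else c) = (Fintype.card α - 1 : R) * c := by
  have : 0 < Fintype.card α := Fintype.card_pos_iff.2 ⟨i⟩
  simp [Finset.sum_ite, Finset.filter_ne, Nat.cast_pred this, sub_mul]

open Classical in
theorem starCost_succ (A cA cB : ℝ) (nA m : ℕ) :
    starCost A cA cB nA (m + 1) = nA * (nA - 1) * (cA + A) + nA * (cA + cB + A + 1) +
      2 * (A + 1) * nA * m + 2 * m * (m + cB) := by
  simp only [starCost, socialCost, cost_eq_sum,
    SimpleGraph.dist_eq_of_forall_adj (starGraph_adj_center nA m), Fintype.sum_sum_type,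
    Fin.sum_univ_succ]
  simp +contextual [_root_.starGraph, eq_comm (a := (0 : Fin (m + 1))),
    Fintype.sum_ite_eq_else_const, ite_add_ite]
  ring

theorem starCost_eq (A cA cB : ℝ) (nA : ℕ) {nB : ℕ} (hB : 1 ≤ nB) :
    starCost A cA cB nA nB = nA * (nA - 1) * (cA + A) + nA * (cA + cB + A + 1) +
      2 * (A + 1) * nA * (nB - 1) + 2 * (nB - 1) * (nB - 1 + cB) := by
  obtain ⟨m, rfl⟩ := Nat.exists_eq_add_of_le' hB
  rw [starCost_succ]
  push_cast
  ring

variable {A cA cB : ℝ} {nA nB : ℕ}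

theorem starCost_le (hcB₀ : 0 ≤ cB) (hcc : cA ≤ cB) (hcB : cB < A) (hB : 1 ≤ nB) :
    starCost A cA cB nA nB ≤
      (nA : ℝ) * ((nA : ℝ) - 1) * ((cA + cB) / 2 + A) + 2 * cB * (nB : ℝ) +
        (A + 1) * (3 * (nA : ℝ) * (nB : ℝ) + (nB : ℝ)) + 2 * ((nB : ℝ) - 1) ^ 2 := by
  have hB' : (1 : ℝ) ≤ nB := by exact_mod_cast hB
  have hA' : (0 : ℝ) ≤ nA := by positivity
  rw [starCost_eq A cA cB nA hB, ← sub_nonneg]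
  have hnA : (0 : ℝ) ≤ nA * (nA - 1) := by
    rcases nA with _ | n
    · simp
    · simp only [Nat.cast_succ, add_sub_cancel_right]
      positivity
  have key : (nA : ℝ) * (cA + cB) ≤ (A + 1) * (nA * nB + nA + nB) := by
    nlinarith [mul_nonneg hA' (sub_nonneg.2 hB')]
  nlinarith [mul_nonneg hnA (sub_nonneg.2 hcc)]

theorem starCost_sub_optFormula (hB : 1 ≤ nB) :
    starCost A cA cB nA nB - optFormula A cA cB nA nB =
      (cA + cB - 1 - A) * nA + (A + cB - cA - 1) * nB + 2 - 2 * cB := by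
  rw [starCost_eq A cA cB nA hB, optFormula]
  ring

theorem two_mul_sq_le_optFormula (hA : 0 ≤ A) (hc : 1 ≤ cA) (hcc : cA ≤ cB) (hnA : 1 ≤ nA) :
    2 * (nB : ℝ) ^ 2 ≤ optFormula A cA cB nA nB := by
  have hA' : (1 : ℝ) ≤ nA := by exact_mod_cast hnA
  have hB' : (0 : ℝ) ≤ nB := by positivity
  rw [optFormula]
  have hcross : 0 ≤ (nB : ℝ) * (A + 1) * (nA - 1 / 2) := by
    have : (0 : ℝ) ≤ nA - 1 / 2 := by linarith
    positivity
  have hclique : 0 ≤ (nA : ℝ) * (nA - 1) * (cA + A) := by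
    have : (0 : ℝ) ≤ nA - 1 := by linarith
    have : 0 ≤ cA + A := by linarith
    positivity
  nlinarith

theorem abs_starCost_sub_optFormula_le (hc : 1 < cA) (hcc : cA ≤ cB) (hcB : cB < A)
    (hnA : 1 ≤ nA) (hAB : nA ≤ nB) :
    |starCost A cA cB nA nB - optFormula A cA cB nA nB| ≤ 5 * A * nB := by
  have hA' : (1 : ℝ) ≤ nA := by exact_mod_cast hnA
  have hAB' : (nA : ℝ) ≤ nB := by exact_mod_cast hAB
  rw [starCost_sub_optFormula (hnA.trans hAB), abs_le]
  constructor <;> nlinarith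

theorem abs_starCost_div_optFormula_sub_one_le (hc : 1 < cA) (hcc : cA ≤ cB) (hcB : cB < A)
    (hnA : 1 ≤ nA) (hAB : nA ≤ nB) :
    |starCost A cA cB nA nB / optFormula A cA cB nA nB - 1| ≤ 3 * A / nB := by
  have hB' : (0 : ℝ) < nB := by exact_mod_cast hnA.trans hAB
  have hO := two_mul_sq_le_optFormula (nB := nB) (by linarith) hc.le hcc hnA
  have hO0 : 0 < optFormula A cA cB nA nB := by nlinarith
  rw [div_sub_one hO0.ne', abs_div, abs_of_pos hO0, div_le_div_iff₀ hO0 hB']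
  nlinarith [abs_starCost_sub_optFormula_le hc hcc hcB hnA hAB]

theorem starCost_bound_and_ratio_general (A cA cB : ℝ)
    (hc : 1 < cA) (hcc : cA ≤ cB) (hcB : cB < A) :
    (∀ nA nB : ℕ, 1 ≤ nA → 1 ≤ nB →
      starCost A cA cB nA nB ≤
        (nA : ℝ) * ((nA : ℝ) - 1) * ((cA + cB) / 2 + A) + 2 * cB * (nB : ℝ) +
          (A + 1) * (3 * (nA : ℝ) * (nB : ℝ) + (nB : ℝ)) + 2 * ((nB : ℝ) - 1) ^ 2) ∧
    (∀ ε : ℝ, 0 < ε → ∃ M : ℕ, 0 < M ∧ ∀ nA nB : ℕ, M ≤ nA → M * nA ≤ nB →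
      |starCost A cA cB nA nB / optFormula A cA cB nA nB - 1| ≤ ε) := by
  refine ⟨fun nA nB _ hB => starCost_le (by linarith) hcc hcB hB, fun ε hε => ?_⟩
  set M := ⌈3 * A / ε⌉₊ + 1
  have hM0 : 0 < M := Nat.succ_pos _
  refine ⟨M, hM0, fun nA nB hMA hMB => ?_⟩
  have hnA : 1 ≤ nA := hM0.trans_le hMA
  have hMB' : M ≤ nB := (Nat.le_mul_of_pos_right M hnA).trans hMB
  have hAB : nA ≤ nB := (Nat.le_mul_of_pos_left nA hM0).trans hMB
  have hB' : (0 : ℝ) < nB := by exact_mod_cast hnA.trans hAB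
  have hM : 3 * A / ε < nB :=
    (Nat.le_ceil _).trans_lt (by exact_mod_cast (Nat.lt_succ_self _).trans_le hMB')
  calc |starCost A cA cB nA nB / optFormula A cA cB nA nB - 1| ≤ 3 * A / nB :=
        abs_starCost_div_optFormula_sub_one_le hc hcc hcB hnA hAB
    _ ≤ ε := by
        rw [div_lt_iff₀ hε] at hM
        rw [div_le_iff₀ hB']
        linarith

/-- The star equilibrium's social cost bound, and `S/S_optimal → 1` when
`|T_B| → ∞` with `|T_B|/|T_A| → ∞`. -/
theorem starCost_bound_and_ratio (A cA cB : ℝ)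
    (hA1 : 1 < A) (hc : 1 < cA) (hcc : cA ≤ cB) (hcB : cB < A) :
    (∀ nA nB : ℕ, 1 ≤ nA → 1 ≤ nB →
      starCost A cA cB nA nB ≤
        (nA : ℝ) * ((nA : ℝ) - 1) * ((cA + cB) / 2 + A) + 2 * cB * (nB : ℝ) +
          (A + 1) * (3 * (nA : ℝ) * (nB : ℝ) + (nB : ℝ)) + 2 * ((nB : ℝ) - 1) ^ 2) ∧
    (∀ ε : ℝ, 0 < ε → ∃ M : ℕ, 0 < M ∧ ∀ nA nB : ℕ, M ≤ nA → M * nA ≤ nB →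
      |starCost A cA cB nA nB / optFormula A cA cB nA nB - 1| ≤ ε) :=
  starCost_bound_and_ratio_general A cA cB hc hcc hcB
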